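/- Let p be a prime not dividing q, k ≥ 1 an integer, and for 1 ≤ v ≤ p set a(p,v) := (1−1/p)^{−k}(1−v/p) − 1. Then ∑_{v=1}^{p} |a(p,v)| · C(p,v) · S(k,v) · v! ≪_k p^{k−1}, i.e., the sum is bounded by a constant depending only on k times p^{k−1}. -/

import Mathlib

/-- Stirling numbers of the second kind. -/
def stirling : ℕ → ℕ → ℕ
  | 0, 0 => 0 + 1
  | 0, _ + 1 => 0
  | _ + 1, 0 => 0
  | n + 1, v + 1 => (v + 1) * stirling n (v + 1) + stirling n v

lemma stirling_eq_zero : ∀ k v : ℕ, k < v → stirling k v = 0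
  | 0, 0, h => absurd h (lt_irrefl 0)
  | 0, _ + 1, _ => rfl
  | _ + 1, 0, h => by omega
  | k + 1, v + 1, h => by
    rw [stirling, stirling_eq_zero k (v + 1) (by omega), stirling_eq_zero k v (by omega)]
    simp

lemma chord (y : ℝ) (h1 : 1 ≤ y) (h2 : y ≤ 2) : ∀ k : ℕ, y ^ k - 1 ≤ (2 ^ k - 1) * (y - 1)
  | 0 => by simp
  | k + 1 => by
    have ih := chord y h1 h2 k
    have hyk : y ^ k ≤ 2 ^ k := pow_le_pow_left₀ (by linarith) h2 k
    have hyk0 : (0:ℝ) ≤ y ^ k := pow_nonneg (by linarith) k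
    calc y ^ (k + 1) - 1 = y ^ k * (y - 1) + (y ^ k - 1) := by ring
      _ ≤ 2 ^ k * (y - 1) + (2 ^ k - 1) * (y - 1) := by nlinarith
      _ = (2 ^ (k + 1) - 1) * (y - 1) := by ring

theorem stmt_18 (k : ℕ) (hk : 1 ≤ k) :
    ∃ C : ℝ, 0 < C ∧ ∀ (p q : ℕ), p.Prime → ¬ p ∣ q →
      ∑ v ∈ Finset.Icc 1 p,
        |(1 - 1 / (p : ℝ)) ^ (-(k : ℤ)) * (1 - (v : ℝ) / p) - 1| *
          (p.choose v * stirling k v * v.factorial : ℕ)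
        ≤ C * (p : ℝ) ^ (k - 1) := by
  set A : ℝ := 2 ^ (k + 1) + 2 ^ k * k with hA
  have hApos : 0 < A := by positivity
  set M : ℕ := ∑ v ∈ Finset.Icc 1 k, stirling k v with hM
  refine ⟨A * (M + 1), by positivity, fun p q hp _ => ?_⟩
  have hp2 : 2 ≤ p := hp.two_le
  have hpr2 : (2 : ℝ) ≤ p := by exact_mod_cast hp2
  have hpr0 : (0 : ℝ) < p := by linarith
  -- termwise bound
  have hterm : ∀ v ∈ Finset.Icc 1 p,
      |(1 - 1 / (p : ℝ)) ^ (-(k : ℤ)) * (1 - (v : ℝ) / p) - 1| *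
        (p.choose v * stirling k v * v.factorial : ℕ)
      ≤ A * (stirling k v : ℝ) * (p : ℝ) ^ (k - 1) := by
    intro v hv
    simp only [Finset.mem_Icc] at hv
    obtain ⟨hv1, hvp⟩ := hv
    by_cases hvk : k < v
    · rw [stirling_eq_zero k v hvk]
      simp
    push_neg at hvk
    -- analytic bound on |a|
    have h1p : (0:ℝ) < 1 - 1 / p := by
      rw [sub_pos, div_lt_one hpr0]; linarith
    have h1p' : (1:ℝ)/2 ≤ 1 - 1 / p := by
      have := one_div_le_one_div_of_le (by norm_num : (0:ℝ) < 2) hpr2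
      linarith
    set y : ℝ := (1 - 1 / (p:ℝ))⁻¹ with hy
    have hy1 : 1 ≤ y := by
      rw [hy, one_le_inv_iff₀]
      constructor
      · exact h1p
      · rw [sub_le_self_iff]; positivity
    have hy2 : y ≤ 2 := by
      rw [hy, inv_le_comm₀ h1p (by norm_num)]
      linarith
    have hB : (1 - 1 / (p : ℝ)) ^ (-(k : ℤ)) = y ^ k := by
      rw [zpow_neg, ← inv_zpow, hy]
      norm_num
    have hyeq : y * (1 - 1 / (p:ℝ)) = 1 := inv_mul_cancel₀ (ne_of_gt h1p)
    have hysub : y - 1 ≤ 2 / p := by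
      have h' : y - 1 = y / p := by
        field_simp at hyeq ⊢
        linarith
      rw [h']
      gcongr
    have hBk : y ^ k ≤ 2 ^ k := pow_le_pow_left₀ (by linarith) hy2 k
    have hB1 : (1:ℝ) ≤ y ^ k := by simpa using pow_le_pow_left₀ (by norm_num : (0:ℝ) ≤ 1) hy1 k
    have hBsub : y ^ k - 1 ≤ 2 ^ (k + 1) / p := by
      have := chord y hy1 hy2 k
      have h2 : ((2:ℝ) ^ k - 1) * (y - 1) ≤ 2 ^ k * (2 / p) := by
        apply mul_le_mul (by linarith) hysub (by linarith) (by positivity)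
      calc y ^ k - 1 ≤ (2 ^ k - 1) * (y - 1) := this
        _ ≤ 2 ^ k * (2 / p) := h2
        _ = 2 ^ (k + 1) / p := by ring
    have hvk' : (v : ℝ) ≤ k := by exact_mod_cast hvk
    have hvpr : (v : ℝ) ≤ p := by exact_mod_cast hvp
    have hv0 : (0:ℝ) ≤ (v : ℝ) := by positivity
    have habs : |(1 - 1 / (p : ℝ)) ^ (-(k : ℤ)) * (1 - (v : ℝ) / p) - 1| ≤ A / p := by
      rw [hB]
      have key : y ^ k * (1 - (v:ℝ) / p) - 1 = (y ^ k - 1) - y ^ k * ((v:ℝ) / p) := by ring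
      rw [key, abs_le]
      have hnn1 : (0:ℝ) ≤ y ^ k - 1 := by linarith
      have hnn2 : (0:ℝ) ≤ y ^ k * ((v:ℝ) / p) := by positivity
      have hub2 : y ^ k * ((v:ℝ) / p) ≤ 2 ^ k * ((k:ℝ) / p) := by
        apply mul_le_mul hBk (by gcongr) (by positivity) (by positivity)
      constructor
      · have : A / p = (2 ^ (k+1)) / p + 2 ^ k * ((k:ℝ)/p) := by
          field_simp
          exact hA
        rw [neg_le, this]
        have := hBsub
        nlinarith [div_nonneg (by positivity : (0:ℝ) ≤ (2:ℝ)^(k+1)) hpr0.le]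
      · have : A / p = (2 ^ (k+1)) / p + 2 ^ k * ((k:ℝ)/p) := by
          field_simp
          exact hA
        rw [this]
        linarith
    -- combinatorial bound
    have hcomb : ((p.choose v * stirling k v * v.factorial : ℕ) : ℝ)
        ≤ (stirling k v : ℝ) * (p : ℝ) ^ v := by
      have hnat : p.choose v * stirling k v * v.factorial ≤ stirling k v * p ^ v := by
        have h1 : p.choose v * v.factorial ≤ p ^ v := by
          have := Nat.descFactorial_le_pow p v
          rw [Nat.descFactorial_eq_factorial_mul_choose] at this
          rw [Nat.mul_comm]
          exact this
        calc p.choose v * stirling k v * v.factorial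
            = stirling k v * (p.choose v * v.factorial) := by ring
          _ ≤ stirling k v * p ^ v := Nat.mul_le_mul_left _ h1
      exact_mod_cast hnat
    calc |(1 - 1 / (p : ℝ)) ^ (-(k : ℤ)) * (1 - (v : ℝ) / p) - 1| *
          (p.choose v * stirling k v * v.factorial : ℕ)
        ≤ (A / p) * ((stirling k v : ℝ) * (p : ℝ) ^ v) := by
          apply mul_le_mul habs hcomb (by positivity) (by positivity)
      _ = A * (stirling k v : ℝ) * (p : ℝ) ^ (v - 1) := by
          obtain ⟨w, rfl⟩ : ∃ w, v = w + 1 := ⟨v - 1, by omega⟩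
          simp only [Nat.add_sub_cancel, pow_succ]
          field_simp
      _ ≤ A * (stirling k v : ℝ) * (p : ℝ) ^ (k - 1) := by
          apply mul_le_mul_of_nonneg_left _ (by positivity)
          apply pow_le_pow_right₀ (by linarith)
          omega
  refine (Finset.sum_le_sum hterm).trans ?_
  -- sum of stirling numbers
  have hsum : ∑ v ∈ Finset.Icc 1 p, stirling k v ≤ M := by
    calc ∑ v ∈ Finset.Icc 1 p, stirling k v
        ≤ ∑ v ∈ Finset.Icc 1 (max p k), stirling k v :=
          Finset.sum_le_sum_of_subset (Finset.Icc_subset_Icc_right (le_max_left p k))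
      _ = ∑ v ∈ Finset.Icc 1 k, stirling k v := by
          refine (Finset.sum_subset (Finset.Icc_subset_Icc_right (le_max_right p k)) ?_).symm
          intro x hx hnx
          simp only [Finset.mem_Icc] at hx hnx
          exact stirling_eq_zero k x (by omega)
  have : ∑ v ∈ Finset.Icc 1 p, A * (stirling k v : ℝ) * (p : ℝ) ^ (k - 1)
      = A * ((∑ v ∈ Finset.Icc 1 p, stirling k v : ℕ) : ℝ) * (p : ℝ) ^ (k - 1) := by
    rw [← Finset.sum_mul, ← Finset.mul_sum]
    push_cast
    ring
  rw [this]
  apply mul_le_mul_of_nonneg_right _ (by positivity)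
  apply mul_le_mul_of_nonneg_left _ hApos.le
  have : ((∑ v ∈ Finset.Icc 1 p, stirling k v : ℕ) : ℝ) ≤ (M : ℝ) := by exact_mod_cast hsum
  linarith
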